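/- arXiv:2602.19420 — 2 statements merged into one kernel-verified Lean document; each statement's English description precedes it below -/
import Mathlib

section
/- Let α_A, β_A, α_B, β_B ∈ ℝ with β_A < α_A and β_B < α_B (uniqueness of the dominant segments). Then there exists k ∈ (0,1) with max(k·α_A + (1−k)·β_B, k·β_A + (1−k)·α_B) < min(α_A, α_B) if and only if β_B < α_A and β_A < α_B. -/
theorem stmt_13 (αA βA αB βB : ℝ) (h1 : βA < αA) (h2 : βB < αB) :
    (∃ k ∈ Set.Ioo (0 : ℝ) 1,
        max (k * αA + (1 - k) * βB) (k * βA + (1 - k) * αB) < min αA αB) ↔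
      (βB < αA ∧ βA < αB) := by
  constructor
  · rintro ⟨k, ⟨hk0, hk1⟩, hmax⟩
    rw [max_lt_iff] at hmax
    obtain ⟨hf, hg⟩ := hmax
    have hfA : k * αA + (1 - k) * βB < αA := lt_of_lt_of_le hf (min_le_left _ _)
    have hgB : k * βA + (1 - k) * αB < αB := lt_of_lt_of_le hg (min_le_right _ _)
    constructor
    · nlinarith [mul_pos hk0 hk0, sub_pos.mpr hk1]
    · nlinarith [mul_pos hk0 hk0, sub_pos.mpr hk1]
  · rintro ⟨hBA, hAB⟩
    have d1 : (0:ℝ) < αA - βB := sub_pos.mpr hBA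
    have d2 : (0:ℝ) < αB - βA := sub_pos.mpr hAB
    set k1 : ℝ := (αB - βB) / (αA - βB) with hk1def
    set k2 : ℝ := (αB - αA) / (αB - βA) with hk2def
    have hk21 : k2 < k1 := by
      rw [hk1def, hk2def, div_lt_div_iff₀ d2 d1]
      nlinarith [mul_pos (sub_pos.mpr hBA) (sub_pos.mpr hBA),
        mul_pos (sub_pos.mpr h2) (sub_pos.mpr hAB),
        mul_pos (sub_pos.mpr h1) (sub_pos.mpr hBA)]
    have hk2lt1 : k2 < 1 := by
      rw [hk2def, div_lt_one d2]; linarith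
    have hk1pos : 0 < k1 := by
      rw [hk1def]; exact div_pos (sub_pos.mpr h2) d1
    set a : ℝ := max k2 0 with hadef
    set b : ℝ := min k1 1 with hbdef
    have hab : a < b := max_lt (lt_min hk21 hk2lt1) (lt_min hk1pos one_pos)
    have ha0 : 0 ≤ a := le_max_right _ _
    have hb1 : b ≤ 1 := min_le_right _ _
    have hak2 : k2 ≤ a := le_max_left _ _
    have hbk1 : b ≤ k1 := min_le_left _ _
    refine ⟨(a + b) / 2, ⟨by linarith, by linarith⟩, ?_⟩
    set k : ℝ := (a + b) / 2 with hkdef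
    have hk0 : 0 < k := by rw [hkdef]; linarith
    have hklt1 : k < 1 := by rw [hkdef]; linarith
    have hkk1 : k < k1 := by rw [hkdef]; linarith
    have hk2k : k2 < k := by rw [hkdef]; linarith
    have hfB : k * αA + (1 - k) * βB < αB := by
      have := (lt_div_iff₀ d1).mp (hk1def ▸ hkk1)
      nlinarith
    have hgA : k * βA + (1 - k) * αB < αA := by
      have := (div_lt_iff₀ d2).mp (hk2def ▸ hk2k)
      nlinarith
    have hfA : k * αA + (1 - k) * βB < αA := by nlinarith [sub_pos.mpr hklt1]
    have hgB : k * βA + (1 - k) * αB < αB := by nlinarith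
    exact max_lt (lt_min hfA hfB) (lt_min hgA hgB)
end

section
/- Let λ₁,…,λₙ, μ₁,…,μₙ ∈ ℝ, n ≥ 2, with λ₁ = max_i λᵢ uniquely, μ₂ = max_i μᵢ uniquely, μ₁ < λ₁, and λ₂ < μ₂. Define fᵢ(k) = k·λᵢ + (1−k)·μᵢ and F(k) = max_i fᵢ(k). Then min_{k∈[0,1]} F(k) < min(λ₁, μ₂). -/
open Filter Set Topology

lemma aux_stmt15 {n : ℕ} (lam mu : Fin n → ℝ) (i1 : Fin n)
    (hlam : ∀ i, i ≠ i1 → lam i < lam i1) (h1 : mu i1 < lam i1) :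
    ∃ k ∈ Set.Icc (0:ℝ) 1, (⨆ i, k * lam i + (1 - k) * mu i) < lam i1 := by
  haveI : Nonempty (Fin n) := ⟨i1⟩
  have hev : ∀ i : Fin n, ∀ᶠ k in 𝓝[<] (1:ℝ),
      k * lam i + (1 - k) * mu i < lam i1 := by
    intro i
    by_cases h : i = i1
    · subst h
      filter_upwards [self_mem_nhdsWithin] with k (hk : k < 1)
      nlinarith
    · have ht : Tendsto (fun k : ℝ => k * lam i + (1 - k) * mu i) (𝓝[<] 1)
          (𝓝 (lam i)) := by
        have hc : Continuous (fun k : ℝ => k * lam i + (1 - k) * mu i) := by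
          continuity
        have := hc.tendsto (1 : ℝ)
        simpa using this.mono_left nhdsWithin_le_nhds
      exact ht.eventually_lt_const (hlam i h)
  have hIcc : ∀ᶠ k in 𝓝[<] (1:ℝ), k ∈ Set.Icc (0:ℝ) 1 := by
    have h0 : Set.Ioo (0:ℝ) 1 ∈ 𝓝[<] (1:ℝ) :=
      Ioo_mem_nhdsLT_of_mem (by norm_num : (1:ℝ) ∈ Set.Ioc 0 1)
    filter_upwards [h0] with k hk
    exact ⟨hk.1.le, hk.2.le⟩
  obtain ⟨k, hall, hk⟩ := ((eventually_all.2 hev).and hIcc).exists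
  refine ⟨k, hk, ?_⟩
  obtain ⟨j, hj⟩ := exists_eq_ciSup_of_finite
    (f := fun i : Fin n => k * lam i + (1 - k) * mu i)
  rw [← hj]
  exact hall j

theorem stmt_15 {n : ℕ} (hn : 2 ≤ n) (lam mu : Fin n → ℝ)
    (i1 i2 : Fin n) (hne : i1 ≠ i2)
    (hlam : ∀ i, i ≠ i1 → lam i < lam i1)
    (hmu : ∀ i, i ≠ i2 → mu i < mu i2)
    (h1 : mu i1 < lam i1) (h2 : lam i2 < mu i2) :
    sInf ((fun k : ℝ => ⨆ i : Fin n, (k * lam i + (1 - k) * mu i)) ''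
        Set.Icc (0 : ℝ) 1) < min (lam i1) (mu i2) := by
  haveI : Nonempty (Fin n) := ⟨i1⟩
  set F : ℝ → ℝ := fun k => ⨆ i : Fin n, (k * lam i + (1 - k) * mu i) with hF
  have hbdd : BddBelow (F '' Set.Icc (0:ℝ) 1) := by
    refine ⟨min (lam i1) (mu i1), ?_⟩
    rintro x ⟨k, hk, rfl⟩
    have h1' : k * lam i1 + (1 - k) * mu i1 ≤ F k :=
      le_ciSup (Finite.bddAbove_range fun i => k * lam i + (1 - k) * mu i) i1
    have : min (lam i1) (mu i1) ≤ k * lam i1 + (1 - k) * mu i1 := by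
      rcases min_cases (lam i1) (mu i1) with ⟨hm, hle⟩ | ⟨hm, hle⟩ <;>
        rw [hm] <;> nlinarith [hk.1, hk.2]
    linarith
  have key : ∃ k ∈ Set.Icc (0:ℝ) 1, F k < min (lam i1) (mu i2) := by
    rcases le_total (lam i1) (mu i2) with hc | hc
    · obtain ⟨k, hk, hlt⟩ := aux_stmt15 lam mu i1 hlam h1
      exact ⟨k, hk, by rw [min_eq_left hc]; exact hlt⟩
    · obtain ⟨k, hk, hlt⟩ := aux_stmt15 mu lam i2 hmu h2
      refine ⟨1 - k, ⟨by linarith [hk.2], by linarith [hk.1]⟩, ?_⟩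
      have heq : F (1 - k) = ⨆ i, k * mu i + (1 - k) * lam i := by
        simp only [hF]
        congr 1; funext i; ring
      rw [heq, min_eq_right hc]
      exact hlt
  obtain ⟨k, hk, hlt⟩ := key
  calc sInf (F '' Set.Icc (0:ℝ) 1) ≤ F k := csInf_le hbdd ⟨k, hk, rfl⟩
    _ < min (lam i1) (mu i2) := hlt
end
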